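/- Suppose T is in case 1 (k < 0 and M < m) and let I_h(t) = a·e^{kt} + (b_m + b_M)/2. Then, besides the indices m and M, the max-norm error is attained at a third observation: either there exists an index r with t_r < t_m and ‖T − I_h(𝔱)‖_∞ = −(T_r − I_h(t_r)), or there exists an index r with t_r > t_M and ‖T − I_h(𝔱)‖_∞ = T_r − I_h(t_r). -/

import Mathlib

/-!
With `x_i = e^{k t_i}` (strictly decreasing in `i`, as `k < 0`), the choice of `a` as the least
of the slopes from the extreme points makes the residual `R_i = T_i - a x_i` satisfy
`R_m ≤ R_i ≤ R_M` for every `i`: beyond the extreme point the slope condition gives it, on the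
other side it follows from `a ≥ 0` and the extremality of `T_m`, `T_M`. Hence the error of
`I_h = a x + (R_m + R_M)/2` has sup norm `(R_M - R_m)/2`, and the index realising the minimal
slope has the same residual as `m` (resp. `M`), so it attains this norm with the stated sign.
-/

open Real

lemma sub_div_sub_comm (u v x y : ℝ) : (u - v) / (x - y) = (v - u) / (y - x) := by
  rw [← neg_div_neg_eq, neg_sub, neg_sub]

lemma sub_mul_le_sub_mul_of_le_div {a u v x y : ℝ} (hyx : y < x) (ha : a ≤ (u - v) / (x - y)) :
    v - a * y ≤ u - a * x := by
  have := (le_div_iff₀ (sub_pos.2 hyx)).1 ha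
  linarith

lemma sub_mul_eq_sub_mul_of_eq_div {a u v x y : ℝ} (hxy : x ≠ y) (ha : a = (u - v) / (x - y)) :
    u - a * x = v - a * y := by
  rw [ha]
  field_simp [sub_ne_zero.2 hxy]
  ring

section Residual

variable {ι : Type*} [LinearOrder ι] {x T : ι → ℝ} {a : ℝ} {m M : ι}

lemma residual_min_le (hx : StrictAnti x) (ha : 0 ≤ a) (hm : ∀ i, T m ≤ T i)
    (hslope : ∀ i, i < m → a ≤ (T i - T m) / (x i - x m)) (i : ι) :
    T m - a * x m ≤ T i - a * x i := by
  rcases lt_or_ge i m with hi | hi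
  · exact sub_mul_le_sub_mul_of_le_div (hx hi) (hslope i hi)
  · have := mul_le_mul_of_nonneg_left (hx.antitone hi) ha
    linarith [hm i]

lemma residual_le_max (hx : StrictAnti x) (ha : 0 ≤ a) (hM : ∀ i, T i ≤ T M)
    (hslope : ∀ j, M < j → a ≤ (T j - T M) / (x j - x M)) (i : ι) :
    T i - a * x i ≤ T M - a * x M := by
  rcases lt_or_ge M i with hi | hi
  · exact sub_mul_le_sub_mul_of_le_div (hx hi) (sub_div_sub_comm .. ▸ hslope i hi)
  · have := mul_le_mul_of_nonneg_left (hx.antitone hi) ha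
    linarith [hM i]

end Residual

lemma pi_norm_sub_midpoint_eq {ι : Type*} [Fintype ι] {R : ι → ℝ} {m M : ι}
    (hm : ∀ i, R m ≤ R i) (hM : ∀ i, R i ≤ R M) :
    ‖R - fun _ => (R m + R M) / 2‖ = (R M - R m) / 2 := by
  have hmM := hm M
  refine le_antisymm ((pi_norm_le_iff_of_nonneg (by linarith)).2 fun i => ?_) ?_
  · rw [Real.norm_eq_abs, Pi.sub_apply, abs_le]
    constructor <;> linarith [hm i, hM i]
  · have := norm_le_pi_norm (R - fun _ => (R m + R M) / 2) M
    rw [Real.norm_eq_abs, Pi.sub_apply, abs_of_nonneg (by linarith)] at this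
    linarith

theorem case1_third_critical_point_general {n : ℕ}
    (t : Fin n → ℝ) (ht : StrictMono t) (T : Fin n → ℝ)
    (k : ℝ) (hk : k < 0)
    (m M : Fin n)
    (hm_min : ∀ i, T m ≤ T i)
    (hM_max : ∀ i, T i ≤ T M)
    (a : ℝ)
    (ha_mem :
      (∃ i, i < m ∧ a = (T i - T m) / (Real.exp (k * t i) - Real.exp (k * t m))) ∨
      (∃ j, M < j ∧ a = (T j - T M) / (Real.exp (k * t j) - Real.exp (k * t M))))
    (ha_min :
      (∀ i, i < m → a ≤ (T i - T m) / (Real.exp (k * t i) - Real.exp (k * t m))) ∧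
      (∀ j, M < j → a ≤ (T j - T M) / (Real.exp (k * t j) - Real.exp (k * t M))))
    (bm bM : ℝ)
    (hbm : bm = T m - a * Real.exp (k * t m))
    (hbM : bM = T M - a * Real.exp (k * t M)) :
    (∃ r : Fin n, t r < t m ∧
      ‖T - (fun i => a * Real.exp (k * t i) + (bm + bM) / 2)‖ =
        -(T r - (a * Real.exp (k * t r) + (bm + bM) / 2))) ∨
    (∃ r : Fin n, t M < t r ∧
      ‖T - (fun i => a * Real.exp (k * t i) + (bm + bM) / 2)‖ =
        T r - (a * Real.exp (k * t r) + (bm + bM) / 2)) := by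
  have hx : StrictAnti fun i => exp (k * t i) := exp_strictMono.comp_strictAnti
    (ht.const_mul_of_neg hk)
  have ha : 0 ≤ a := by
    rcases ha_mem with ⟨i, hi, rfl⟩ | ⟨j, hj, rfl⟩
    · exact div_nonneg (sub_nonneg.2 (hm_min i)) (sub_pos.2 (hx hi)).le
    · exact div_nonneg_of_nonpos (sub_nonpos.2 (hM_max j)) (sub_neg.2 (hx hj)).le
  have hnorm : ‖T - (fun i => a * exp (k * t i) + (bm + bM) / 2)‖ = (bM - bm) / 2 := by
    have hres : T - (fun i => a * exp (k * t i) + (bm + bM) / 2) =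
        (fun i => T i - a * exp (k * t i)) - fun _ => (bm + bM) / 2 := by
      ext i
      simp only [Pi.sub_apply]
      ring
    rw [hres, hbm, hbM]
    exact pi_norm_sub_midpoint_eq (residual_min_le hx ha hm_min ha_min.1)
      (residual_le_max hx ha hM_max ha_min.2)
  rcases ha_mem with ⟨r, hr, har⟩ | ⟨r, hr, har⟩
  · have := sub_mul_eq_sub_mul_of_eq_div (hx hr).ne' har
    exact Or.inl ⟨r, ht hr, by rw [hnorm]; linarith⟩
  · have := sub_mul_eq_sub_mul_of_eq_div (hx hr).ne har
    exact Or.inr ⟨r, ht hr, by rw [hnorm]; linarith⟩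

/-- In case 1 (`k < 0` and `M < m`), besides the indices `m` and
`M`, the max-norm error of `I_h(t) = a·e^{kt} + (b_m + b_M)/2` is attained at a
third observation: either there is an index `r` with `t_r < t_m` and
`‖T − I_h(𝔱)‖_∞ = −(T_r − I_h(t_r))`, or there is an index `r` with
`t_r > t_M` and `‖T − I_h(𝔱)‖_∞ = T_r − I_h(t_r)`. -/
theorem case1_third_critical_point {n : ℕ}
    (t : Fin n → ℝ) (ht : StrictMono t) (T : Fin n → ℝ)
    (k : ℝ) (hk : k < 0)
    (m M : Fin n)
    (hm_min : ∀ i, T m ≤ T i) (hm_first : ∀ i, T i = T m → m ≤ i)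
    (hM_max : ∀ i, T i ≤ T M) (hM_last : ∀ i, T i = T M → i ≤ M)
    (hMm : M < m)
    (a : ℝ)
    (ha_mem :
      (∃ i, i < m ∧ a = (T i - T m) / (Real.exp (k * t i) - Real.exp (k * t m))) ∨
      (∃ j, M < j ∧ a = (T j - T M) / (Real.exp (k * t j) - Real.exp (k * t M))))
    (ha_min :
      (∀ i, i < m → a ≤ (T i - T m) / (Real.exp (k * t i) - Real.exp (k * t m))) ∧
      (∀ j, M < j → a ≤ (T j - T M) / (Real.exp (k * t j) - Real.exp (k * t M))))
    (bm bM : ℝ)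
    (hbm : bm = T m - a * Real.exp (k * t m))
    (hbM : bM = T M - a * Real.exp (k * t M)) :
    (∃ r : Fin n, t r < t m ∧
      ‖T - (fun i => a * Real.exp (k * t i) + (bm + bM) / 2)‖ =
        -(T r - (a * Real.exp (k * t r) + (bm + bM) / 2))) ∨
    (∃ r : Fin n, t M < t r ∧
      ‖T - (fun i => a * Real.exp (k * t i) + (bm + bM) / 2)‖ =
        T r - (a * Real.exp (k * t r) + (bm + bM) / 2)) :=
  case1_third_critical_point_general t ht T k hk m M hm_min hM_max a ha_mem ha_min bm bM hbm hbM
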